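/- arXiv:2102.09255 — 2 statements merged into one kernel-verified Lean document; each statement's English description precedes it below -/
import Mathlib

section
/- If a deterministic automaton G is nonblocking, then for every event subset Σ' ⊆ Σ the observer (subset-construction) automaton P_{Σ'}(G) is nonblocking, where a state of the observer automaton is marked iff it contains a marked state of G. -/
open scoped Classical

/-- A deterministic partial automaton `G = (A, Σ, δ, a₀, A_m)`. -/
structure DAut (A E : Type*) where
  δ : A → E → Option A
  init : A
  marked : Set A

/-- The transition function extended to words. -/
def DAut.run {A E : Type*} (M : DAut A E) : A → List E → Option A
  | a, [] => some a
  | a, e :: w => (M.δ a e).bind fun a' => M.run a' w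

/-- Natural projection onto the event subset `S`. -/
def natProj {α : Type*} (S : Set α) [DecidablePred (· ∈ S)] (w : List α) : List α :=
  w.filter fun e => decide (e ∈ S)

/-- Initial state of the observer (subset-construction) automaton: the set of
states reachable from `a₀` via words projecting to `ε`. -/
def obsInit {A E : Type*} (M : DAut A E) (S : Set E) [DecidablePred (· ∈ S)] : Set A :=
  {a | ∃ w, natProj S w = [] ∧ M.run M.init w = some a}

/-- From a subset-state `T` and `e ∈ Σ'`, the set of states reachable from `T`
via words projecting to `e`. -/
def obsStep {A E : Type*} (M : DAut A E) (S : Set E) [DecidablePred (· ∈ S)]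
    (T : Set A) (e : E) : Set A :=
  {a | ∃ a' ∈ T, ∃ w, natProj S w = [e] ∧ M.run a' w = some a}

/-- Partial transition function of the observer automaton: defined for `e ∈ Σ'`
when the successor subset-state is nonempty. -/
noncomputable def obsDelta {A E : Type*} (M : DAut A E) (S : Set E) [DecidablePred (· ∈ S)]
    (T : Set A) (e : E) : Option (Set A) :=
  if e ∈ S ∧ (obsStep M S T e).Nonempty then some (obsStep M S T e) else none

/-- The observer transition function extended to words over `Σ'`. -/
noncomputable def obsRun {A E : Type*} (M : DAut A E) (S : Set E) [DecidablePred (· ∈ S)] :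
    Set A → List E → Option (Set A)
  | T, [] => some T
  | T, e :: v => (obsDelta M S T e).bind fun T' => obsRun M S T' v

/-- `G` is nonblocking: from every state reachable from the initial state, some
marked state is reachable. -/
def Nonblocking {A E : Type*} (M : DAut A E) : Prop :=
  ∀ a : A, (∃ w, M.run M.init w = some a) →
    ∃ v am, M.run a v = some am ∧ am ∈ M.marked

/-!
Every subset-state the observer reaches from its initial state is nonempty, consists of reachable
states of `G`, and is closed under runs of `G` that project to `ε`. Pick a state `a` in it; a run of
`G` from `a` to a marked state, projected to `Σ'`, is then a run of the observer that ends in a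
subset-state containing that marked state.
-/

namespace DAut

variable {A E : Type*} (M : DAut A E)

def Reachable (a : A) : Prop := ∃ w, M.run M.init w = some a

variable {M}

theorem run_append (a : A) (u v : List E) :
    M.run a (u ++ v) = (M.run a u).bind fun b => M.run b v := by
  induction u generalizing a with
  | nil => rfl
  | cons e u ih => cases h : M.δ a e <;> simp [run, h, ih]

theorem run_singleton (a : A) (e : E) : M.run a [e] = M.δ a e := by
  cases h : M.δ a e <;> simp [run, h]

theorem run_cons_eq_some {a b : A} {e : E} {v : List E} :
    M.run a (e :: v) = some b ↔ ∃ a', M.δ a e = some a' ∧ M.run a' v = some b :=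
  Option.bind_eq_some_iff

theorem run_append_eq_some {a b c : A} {u v : List E} (hu : M.run a u = some b)
    (hv : M.run b v = some c) : M.run a (u ++ v) = some c := by
  rw [run_append, hu, Option.bind_some, hv]

theorem Reachable.run {a b : A} (ha : M.Reachable a) {v : List E} (hv : M.run a v = some b) :
    M.Reachable b :=
  let ⟨w, hw⟩ := ha
  ⟨w ++ v, run_append_eq_some hw hv⟩

end DAut

theorem natProj_append {α : Type*} (S : Set α) [DecidablePred (· ∈ S)] (u v : List α) :
    natProj S (u ++ v) = natProj S u ++ natProj S v :=
  List.filter_append u v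

section Observer

variable {A E : Type*} {M : DAut A E} {S : Set E} [DecidablePred (· ∈ S)]

variable (M S) in
def SilentlyClosed (T : Set A) : Prop :=
  ∀ a ∈ T, ∀ u b, natProj S u = [] → M.run a u = some b → b ∈ T

theorem silentlyClosed_obsInit : SilentlyClosed M S (obsInit M S) := by
  rintro a ⟨w, hw, ha⟩ u b hu hb
  exact ⟨w ++ u, by rw [natProj_append, hw, hu]; rfl, DAut.run_append_eq_some ha hb⟩

theorem silentlyClosed_obsStep (T : Set A) (e : E) : SilentlyClosed M S (obsStep M S T e) := by
  rintro a ⟨a', ha', w, hw, ha⟩ u b hu hb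
  exact ⟨a', ha', w ++ u, by rw [natProj_append, hw, hu]; rfl, DAut.run_append_eq_some ha hb⟩

theorem obsInit_subset_reachable : obsInit M S ⊆ {a | M.Reachable a} :=
  fun _ ⟨w, _, hw⟩ => ⟨w, hw⟩

theorem obsStep_subset_reachable {T : Set A} (hT : T ⊆ {a | M.Reachable a}) (e : E) :
    obsStep M S T e ⊆ {a | M.Reachable a} :=
  fun _ ⟨_, ha', _, _, hw⟩ => (hT ha').run hw

theorem obsDelta_eq_some_iff {T T' : Set A} {e : E} :
    obsDelta M S T e = some T' ↔ e ∈ S ∧ (obsStep M S T e).Nonempty ∧ obsStep M S T e = T' := by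
  unfold obsDelta
  split_ifs with h <;> simp_all

theorem obsRun_induction {P : Set A → Prop}
    (step : ∀ T e, P T → (obsStep M S T e).Nonempty → P (obsStep M S T e))
    {T₀ T : Set A} {w : List E} (hw : obsRun M S T₀ w = some T) (h₀ : P T₀) : P T := by
  induction w generalizing T₀ with
  | nil => exact Option.some_injective _ hw ▸ h₀
  | cons e w ih =>
    obtain ⟨T', hT', hw⟩ := Option.bind_eq_some_iff.mp hw
    obtain ⟨-, hne, rfl⟩ := obsDelta_eq_some_iff.mp hT'
    exact ih hw (step _ _ h₀ hne)

theorem nonempty_of_obsRun_obsInit {T : Set A} {w : List E}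
    (hw : obsRun M S (obsInit M S) w = some T) : T.Nonempty :=
  obsRun_induction (fun _ _ _ hne => hne) hw ⟨M.init, [], rfl, rfl⟩

theorem silentlyClosed_of_obsRun_obsInit {T : Set A} {w : List E}
    (hw : obsRun M S (obsInit M S) w = some T) : SilentlyClosed M S T :=
  obsRun_induction (fun _ e _ _ => silentlyClosed_obsStep _ e) hw silentlyClosed_obsInit

theorem subset_reachable_of_obsRun_obsInit {T : Set A} {w : List E}
    (hw : obsRun M S (obsInit M S) w = some T) : T ⊆ {a | M.Reachable a} :=
  obsRun_induction (fun _ e hT _ => obsStep_subset_reachable hT e) hw obsInit_subset_reachable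

/-- An observable event moves into the next subset-state; an unobservable one stays inside the
current, silently closed, subset-state. -/
theorem exists_obsRun_natProj_of_run {T : Set A} (hT : SilentlyClosed M S T) {a b : A}
    (ha : a ∈ T) {v : List E} (hv : M.run a v = some b) :
    ∃ T', obsRun M S T (natProj S v) = some T' ∧ b ∈ T' := by
  induction v generalizing a T with
  | nil => exact ⟨T, rfl, Option.some_injective _ hv ▸ ha⟩
  | cons e v ih =>
    obtain ⟨a', hδ, hv⟩ := DAut.run_cons_eq_some.mp hv
    have hrun : M.run a [e] = some a' := (DAut.run_singleton a e).trans hδ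
    by_cases he : e ∈ S
    · have ha' : a' ∈ obsStep M S T e := ⟨a, ha, [e], by simp [natProj, he], hrun⟩
      have hδobs : obsDelta M S T e = some (obsStep M S T e) :=
        obsDelta_eq_some_iff.mpr ⟨he, ⟨a', ha'⟩, rfl⟩
      obtain ⟨T', hT', hb⟩ := ih (silentlyClosed_obsStep T e) ha' hv
      exact ⟨T', by simpa [natProj, he, obsRun, hδobs] using hT', hb⟩
    · have ha' : a' ∈ T := hT a ha [e] a' (by simp [natProj, he]) hrun
      obtain ⟨T', hT', hb⟩ := ih hT ha' hv
      exact ⟨T', by simpa [natProj, he] using hT', hb⟩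

end Observer

/-- If a deterministic automaton `G` is nonblocking, then for every event subset
`Σ' ⊆ Σ` the observer automaton `P_{Σ'}(G)` is nonblocking, where a state of the
observer is marked iff it contains a marked state of `G`. -/
theorem observer_nonblocking {A E : Type*} (M : DAut A E) (S : Set E)
    [DecidablePred (· ∈ S)] (h : Nonblocking M) :
    ∀ T : Set A, (∃ w, obsRun M S (obsInit M S) w = some T) →
      ∃ v T', obsRun M S T v = some T' ∧ (T' ∩ M.marked).Nonempty := by
  rintro T ⟨w, hw⟩
  obtain ⟨a, ha⟩ := nonempty_of_obsRun_obsInit hw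
  obtain ⟨v, b, hv, hb⟩ := h a (subset_reachable_of_obsRun_obsInit hw ha)
  obtain ⟨T', hT', hbT'⟩ :=
    exists_obsRun_natProj_of_run (silentlyClosed_of_obsRun_obsInit hw) ha hv
  exact ⟨natProj S v, T', hT', b, hbT', hb⟩
end

section
/- Under the assumption L(NS) ⊆ P_{Σ_NS}(L(NP)), the networked supervised plant equals the synchronous product of the supervisor and the networked plant: L(NS ∥_{N_c,N_o} G) = L(NS ∥ NP), where ∥ denotes ordinary synchronous composition on the shared alphabet Σ_NS ⊆ Σ_NSP. -/
namespace NSC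

/-- Events of the networked closed loop: enabling events `σ_e`, plant (active)
events `σ ∈ Σ_a`, observed events `σ_o`, and the clock event `tick`.
The plant alphabet `Σ_G` consists of the active events and `tick`; the
supervisor alphabet `Σ_NS` consists of enabling events, observed events and
`tick`, so that `Σ_NS ∩ Σ_G = {tick}`. -/
inductive Ev (E : Type) : Type
  | enable : E → Ev E
  | act : E → Ev E
  | obsv : E → Ev E
  | tick : Ev E

/-- A plant TDES `G = (A, Σ_G, δ_G, a₀, A_m)`: partial transitions on active
events and on `tick`. -/
structure Plant (A E : Type) where
  δa : A → E → Option A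
  δt : A → Option A
  init : A
  marked : Set A

/-- A networked supervisor `NS = (Y, Σ_NS, δ_NS, y₀, Y_m)`: partial transitions
on enabling events, observed events and `tick`. -/
structure Sup (Y E : Type) where
  δe : Y → E → Option Y
  δo : Y → E → Option Y
  δt : Y → Option Y
  init : Y
  marked : Set Y

variable {A Y E : Type}

/-- `δ_G` extended to words over the full alphabet (undefined off `Σ_G`). -/
def Plant.run (G : Plant A E) : A → List (Ev E) → Option A
  | a, [] => some a
  | a, Ev.act σ :: w => (G.δa a σ).bind fun a' => G.run a' w
  | a, Ev.tick :: w => (G.δt a).bind fun a' => G.run a' w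
  | _, Ev.enable _ :: _ => none
  | _, Ev.obsv _ :: _ => none

/-- `δ_NS` extended to words over the full alphabet (undefined off `Σ_NS`). -/
def Sup.run (NS : Sup Y E) : Y → List (Ev E) → Option Y
  | y, [] => some y
  | y, Ev.enable σ :: w => (NS.δe y σ).bind fun y' => NS.run y' w
  | y, Ev.obsv σ :: w => (NS.δo y σ).bind fun y' => NS.run y' w
  | y, Ev.tick :: w => (NS.δt y).bind fun y' => NS.run y' w
  | _, Ev.act _ :: _ => none

/-- Membership in the plant alphabet `Σ_G = Σ_a ∪ {tick}`. -/
def Ev.isG : Ev E → Bool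
  | Ev.act _ => true
  | Ev.tick => true
  | _ => false

/-- Membership in the supervisor alphabet `Σ_NS = Σ_e ∪ Σ_o ∪ {tick}`. -/
def Ev.isNS : Ev E → Bool
  | Ev.act _ => false
  | _ => true

/-- Natural projection `P_{Σ_G}`. -/
def projG (w : List (Ev E)) : List (Ev E) := w.filter Ev.isG

/-- Natural projection `P_{Σ_NS}`. -/
def projNS (w : List (Ev E)) : List (Ev E) := w.filter Ev.isNS

/-- `app(l,(σ,n))`: append to the FIFO control channel if not full. -/
def chanApp (Lmax : ℕ) (l : List (E × ℕ)) (p : E × ℕ) : List (E × ℕ) :=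
  if l.length < Lmax then l ++ [p] else l

/-- `m ⊎ [(σ,n)]`: insert into the observation channel if not full. -/
def chanIns (Mmax : ℕ) (m : Multiset (E × ℕ)) (p : E × ℕ) : Multiset (E × ℕ) :=
  if Multiset.card m < Mmax then p ::ₘ m else m

/-- `l − 1`: decrement all control-channel counters, dropping expired entries. -/
def chanDecL (l : List (E × ℕ)) : List (E × ℕ) :=
  (l.filter fun p => p.2 != 0).map fun p => (p.1, p.2 - 1)

/-- `m − 1`: decrement all observation-channel counters, dropping expired
entries. -/
def chanDecM (m : Multiset (E × ℕ)) : Multiset (E × ℕ) :=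
  (m.filter fun p => p.2 ≠ 0).map fun p => (p.1, p.2 - 1)

variable [DecidableEq E]

/-- One transition of the networked supervised plant
`NSP = NS ‖_{N_c,N_o} G` (Definition of the timed asynchronous composition):
states are tuples `(a, y, m, l)`. -/
inductive NSPstep (G : Plant A E) (NS : Sup Y E) (Sc Suc : Set E)
    (Nc No Lmax Mmax : ℕ) :
    A × Y × Multiset (E × ℕ) × List (E × ℕ) → Ev E →
      A × Y × Multiset (E × ℕ) × List (E × ℕ) → Prop
  | enable {a : A} {y : Y} {m : Multiset (E × ℕ)} {l : List (E × ℕ)} {y' : Y}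
      (σ : E) (h : NS.δe y σ = some y') :
      NSPstep G NS Sc Suc Nc No Lmax Mmax (a, y, m, l) (Ev.enable σ)
        (a, y', m, chanApp Lmax l (σ, Nc))
  | ctrl {a : A} {y : Y} {m : Multiset (E × ℕ)} {l : List (E × ℕ)} {a' : A}
      (σ : E) (hσ : σ ∈ Sc) (h : G.δa a σ = some a')
      (hl : l.head? = some (σ, 0)) :
      NSPstep G NS Sc Suc Nc No Lmax Mmax (a, y, m, l) (Ev.act σ)
        (a', y, chanIns Mmax m (σ, No), l.tail)
  | unctrl {a : A} {y : Y} {m : Multiset (E × ℕ)} {l : List (E × ℕ)} {a' : A}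
      (σ : E) (hσ : σ ∈ Suc) (h : G.δa a σ = some a') :
      NSPstep G NS Sc Suc Nc No Lmax Mmax (a, y, m, l) (Ev.act σ)
        (a', y, chanIns Mmax m (σ, No), l)
  | tick {a : A} {y : Y} {m : Multiset (E × ℕ)} {l : List (E × ℕ)} {a' : A}
      {y' : Y} (hG : G.δt a = some a') (hNS : NS.δt y = some y')
      (hm : ∀ σ : E, (σ, 0) ∉ m) :
      NSPstep G NS Sc Suc Nc No Lmax Mmax (a, y, m, l) Ev.tick
        (a', y', chanDecM m, chanDecL l)
  | observe {a : A} {y : Y} {m : Multiset (E × ℕ)} {l : List (E × ℕ)} {y' : Y}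
      (σ : E) (h : NS.δo y σ = some y') (hm : (σ, 0) ∈ m) :
      NSPstep G NS Sc Suc Nc No Lmax Mmax (a, y, m, l) (Ev.obsv σ)
        (a, y', m.erase (σ, 0), l)

/-- Labelled paths of a labelled transition relation. -/
inductive Path {S L : Type} (step : S → L → S → Prop) : S → List L → S → Prop
  | nil (s : S) : Path step s [] s
  | cons {s s' s'' : S} {e : L} {w : List L} :
      step s e s' → Path step s' w s'' → Path step s (e :: w) s''

/-- Initial state of `NSP`: both channels are empty. -/
def nspInit (G : Plant A E) (NS : Sup Y E) :
    A × Y × Multiset (E × ℕ) × List (E × ℕ) :=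
  (G.init, NS.init, 0, [])

end NSC

namespace NSC

variable {A Y E : Type}

/-- Projection onto `Σ_G ∖ Σ_uc` (controllable active events and `tick`),
used to build `G' = P_{Σ_G∖Σ_uc}(G)`. -/
def projCT (Sc : Set E) [DecidablePred (· ∈ Sc)] (w : List (Ev E)) : List (Ev E) :=
  w.filter fun e =>
    match e with
    | Ev.act σ => decide (σ ∈ Sc)
    | Ev.tick => true
    | _ => false

/-- Subset-construction transition of the determinized projection `G'`: from a
subset-state `S` and an event `e` (a controllable active event or `tick`), the
set of states reachable via words of `G` projecting to `e`.  The transition is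
"defined" iff this set is nonempty. -/
def detStep (G : Plant A E) (Sc : Set E) [DecidablePred (· ∈ Sc)]
    (S : Set A) (e : Ev E) : Set A :=
  {a' | ∃ a ∈ S, ∃ w, projCT Sc w = [e] ∧ G.run a w = some a'}

/-- Initial subset-state of `G'`. -/
def detInit (G : Plant A E) (Sc : Set E) [DecidablePred (· ∈ Sc)] : Set A :=
  {a' | ∃ w, projCT Sc w = [] ∧ G.run G.init w = some a'}

/-- Iterated `tick` transitions of `G'` (for the `N_c`-tick lookahead). -/
def tickIter (G : Plant A E) (Sc : Set E) [DecidablePred (· ∈ Sc)] :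
    ℕ → Set A → Set A
  | 0, S => S
  | n + 1, S => tickIter G Sc n (detStep G Sc S Ev.tick)

variable [DecidableEq E]

/-- One transition of the networked plant `NP = Π(G, N_c, N_o, L_max, M_max)`:
states are tuples `(a, a', m, l)` of a plant state, a lookahead subset-state of
`G'`, the observation channel and the control channel. -/
inductive NPstep (G : Plant A E) (Sc Suc : Set E) [DecidablePred (· ∈ Sc)]
    (Nc No Lmax Mmax : ℕ) :
    A × Set A × Multiset (E × ℕ) × List (E × ℕ) → Ev E →
      A × Set A × Multiset (E × ℕ) × List (E × ℕ) → Prop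
  | enable {a : A} {S : Set A} {m : Multiset (E × ℕ)} {l : List (E × ℕ)}
      (σ : E) (hσ : σ ∈ Sc) (hne : (detStep G Sc S (Ev.act σ)).Nonempty) :
      NPstep G Sc Suc Nc No Lmax Mmax (a, S, m, l) (Ev.enable σ)
        (a, detStep G Sc S (Ev.act σ), m, chanApp Lmax l (σ, Nc))
  | ctrl {a : A} {S : Set A} {m : Multiset (E × ℕ)} {l : List (E × ℕ)} {a' : A}
      (σ : E) (hσ : σ ∈ Sc) (h : G.δa a σ = some a')
      (hl : l.head? = some (σ, 0)) :
      NPstep G Sc Suc Nc No Lmax Mmax (a, S, m, l) (Ev.act σ)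
        (a', S, chanIns Mmax m (σ, No), l.tail)
  | unctrl {a : A} {S : Set A} {m : Multiset (E × ℕ)} {l : List (E × ℕ)} {a' : A}
      (σ : E) (hσ : σ ∈ Suc) (h : G.δa a σ = some a') :
      NPstep G Sc Suc Nc No Lmax Mmax (a, S, m, l) (Ev.act σ)
        (a', S, chanIns Mmax m (σ, No), l)
  | tickDef {a : A} {S : Set A} {m : Multiset (E × ℕ)} {l : List (E × ℕ)}
      {a1 : A} (hG : G.δt a = some a1)
      (hc : ∀ σ ∈ Sc, ¬(detStep G Sc S (Ev.act σ)).Nonempty)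
      (hm : ∀ σ : E, (σ, 0) ∉ m)
      (hne : (detStep G Sc S Ev.tick).Nonempty) :
      NPstep G Sc Suc Nc No Lmax Mmax (a, S, m, l) Ev.tick
        (a1, detStep G Sc S Ev.tick, chanDecM m, chanDecL l)
  | tickUndef {a : A} {S : Set A} {m : Multiset (E × ℕ)} {l : List (E × ℕ)}
      {a1 : A} (hG : G.δt a = some a1)
      (hc : ∀ σ ∈ Sc, ¬(detStep G Sc S (Ev.act σ)).Nonempty)
      (hm : ∀ σ : E, (σ, 0) ∉ m)
      (hne : ¬(detStep G Sc S Ev.tick).Nonempty) :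
      NPstep G Sc Suc Nc No Lmax Mmax (a, S, m, l) Ev.tick
        (a1, S, chanDecM m, chanDecL l)
  | observe {a : A} {S : Set A} {m : Multiset (E × ℕ)} {l : List (E × ℕ)}
      (σ : E) (hm : (σ, 0) ∈ m) :
      NPstep G Sc Suc Nc No Lmax Mmax (a, S, m, l) (Ev.obsv σ)
        (a, S, m.erase (σ, 0), l)

/-- Initial state of `NP`: the lookahead component is `δ'_G(a'₀, tick^{N_c})`
and both channels are empty. -/
def npInit (G : Plant A E) (Sc : Set E) [DecidablePred (· ∈ Sc)] (Nc : ℕ) :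
    A × Set A × Multiset (E × ℕ) × List (E × ℕ) :=
  (G.init, tickIter G Sc Nc (detInit G Sc), 0, [])

end NSC

namespace NSC

/-
The supervisor state and the lookahead state of `NP` are both driven by the `Σ_NS`-projection
of the word alone, while the plant state and the two channels evolve identically in `NSP` and
`NP`. An `NSP` transition therefore becomes an `NP` transition as soon as the lookahead guard
of `NP` holds, and this guard, depending only on the projected prefix, is read off from the
`NP` run that `L(NS) ⊆ P_{Σ_NS}(L(NP))` supplies for that prefix extended by the event.
Conversely an `NP` run whose projection `NS` accepts is an `NSP` run, the `NS` guards being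
exactly the ones checked by `NS.run`.
-/

variable {A Y E : Type}

theorem Sup.run_append (NS : Sup Y E) (y : Y) (u v : List (Ev E)) :
    NS.run y (u ++ v) = (NS.run y u).bind fun y' => NS.run y' v := by
  induction u generalizing y with
  | nil => simp [Sup.run]
  | cons e u ih =>
    cases e with
    | enable σ => cases h : NS.δe y σ <;> simp [Sup.run, h, ih]
    | obsv σ => cases h : NS.δo y σ <;> simp [Sup.run, h, ih]
    | tick => cases h : NS.δt y <;> simp [Sup.run, h, ih]
    | act σ => simp [Sup.run]

theorem projNS_cons (e : Ev E) (w : List (Ev E)) :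
    projNS (e :: w) = projNS [e] ++ projNS w := by
  simp only [projNS, ← List.filter_append, List.singleton_append]

theorem projNS_singleton_of_isNS {e : Ev E} (he : e.isNS) : projNS [e] = [e] := by
  simp [projNS, he]

/-- `L(NS) ⊆ P_{Σ_NS}(L(NP))`. -/
def NSLangSubsetProjNP [DecidableEq E] (G : Plant A E) (NS : Sup Y E) (Sc Suc : Set E)
    [DecidablePred (· ∈ Sc)] (Nc No Lmax Mmax : ℕ) : Prop :=
  ∀ v : List (Ev E), (NS.run NS.init v).isSome →
    ∃ w : List (Ev E),
      (∃ x, Path (NPstep G Sc Suc Nc No Lmax Mmax) (npInit G Sc Nc) w x) ∧ projNS w = v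

section Lookahead

variable (G : Plant A E) (Sc : Set E) [DecidablePred (· ∈ Sc)]

noncomputable def lookaheadUpdate (S : Set A) : Ev E → Set A
  | Ev.enable σ => detStep G Sc S (Ev.act σ)
  | Ev.tick => open Classical in
      if (detStep G Sc S Ev.tick).Nonempty then detStep G Sc S Ev.tick else S
  | _ => S

/-- The guards of `NP` that read its lookahead component; all other guards of `NP` are also
guards of `NSP`. -/
def LookaheadEnables (S : Set A) : Ev E → Prop
  | Ev.enable σ => σ ∈ Sc ∧ (detStep G Sc S (Ev.act σ)).Nonempty
  | Ev.tick => ∀ σ ∈ Sc, ¬(detStep G Sc S (Ev.act σ)).Nonempty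
  | _ => True

theorem foldl_lookaheadUpdate_projNS_singleton (S : Set A) (e : Ev E) :
    (projNS [e]).foldl (lookaheadUpdate G Sc) S = lookaheadUpdate G Sc S e := by
  cases e <;> rfl

end Lookahead

variable [DecidableEq E] {G : Plant A E} {NS : Sup Y E} {Sc Suc : Set E} {Nc No Lmax Mmax : ℕ}

theorem NSPstep.run_projNS {s s' : A × Y × Multiset (E × ℕ) × List (E × ℕ)} {e : Ev E}
    (h : NSPstep G NS Sc Suc Nc No Lmax Mmax s e s') :
    NS.run s.2.1 (projNS [e]) = some s'.2.1 := by
  cases h <;> simp [Sup.run, projNS, List.filter_cons, Ev.isNS, *]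

theorem Path.run_projNS {s z : A × Y × Multiset (E × ℕ) × List (E × ℕ)} {w : List (Ev E)}
    (h : Path (NSPstep G NS Sc Suc Nc No Lmax Mmax) s w z) :
    NS.run s.2.1 (projNS w) = some z.2.1 := by
  induction h with
  | nil => rfl
  | cons st _ ih => rw [projNS_cons, Sup.run_append, st.run_projNS, Option.bind_some, ih]

variable [DecidablePred (· ∈ Sc)]

theorem NPstep.lookahead_eq {t t' : A × Set A × Multiset (E × ℕ) × List (E × ℕ)} {e : Ev E}
    (h : NPstep G Sc Suc Nc No Lmax Mmax t e t') :
    t'.2.1 = lookaheadUpdate G Sc t.2.1 e := by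
  cases h <;> simp [lookaheadUpdate, *]

theorem NPstep.lookaheadEnables
    {t t' : A × Set A × Multiset (E × ℕ) × List (E × ℕ)} {e : Ev E}
    (h : NPstep G Sc Suc Nc No Lmax Mmax t e t') :
    LookaheadEnables G Sc t.2.1 e := by
  cases h <;> simp_all [LookaheadEnables]

theorem Path.lookaheadEnables_of_projNS_eq
    {t x : A × Set A × Multiset (E × ℕ) × List (E × ℕ)} {w : List (Ev E)}
    (h : Path (NPstep G Sc Suc Nc No Lmax Mmax) t w x) :
    ∀ {p q : List (Ev E)} {e : Ev E}, projNS w = p ++ e :: q →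
      LookaheadEnables G Sc (p.foldl (lookaheadUpdate G Sc) t.2.1) e := by
  induction h with
  | nil => simp [projNS]
  | @cons t t' _ e' _ st _ ih =>
    intro p q e hw
    by_cases he' : e'.isNS
    · rw [projNS_cons, projNS_singleton_of_isNS he', List.singleton_append] at hw
      cases p with
      | nil =>
        obtain ⟨rfl, -⟩ := List.cons.inj hw
        exact st.lookaheadEnables
      | cons e'' p =>
        rw [List.cons_append, List.cons.injEq] at hw
        obtain ⟨rfl, hw⟩ := hw
        rw [List.foldl_cons, ← st.lookahead_eq]
        exact ih hw
    · rw [projNS_cons, show projNS [e'] = [] by simp [projNS, he'], List.nil_append] at hw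
      have hS : t'.2.1 = t.2.1 := by
        cases e' <;> simp_all [Ev.isNS, st.lookahead_eq, lookaheadUpdate]
      exact hS ▸ ih hw

theorem lookaheadEnables_of_run
    (hsub : NSLangSubsetProjNP G NS Sc Suc Nc No Lmax Mmax)
    {p : List (Ev E)} {e : Ev E} (hp : (NS.run NS.init (p ++ projNS [e])).isSome) :
    LookaheadEnables G Sc (p.foldl (lookaheadUpdate G Sc) (npInit G Sc Nc).2.1) e := by
  by_cases he : e.isNS
  · rw [projNS_singleton_of_isNS he] at hp
    obtain ⟨w, ⟨x, hx⟩, hw⟩ := hsub _ hp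
    exact hx.lookaheadEnables_of_projNS_eq hw
  · cases e <;> simp_all [Ev.isNS, LookaheadEnables]

theorem NSPstep.toNPstep {s s' : A × Y × Multiset (E × ℕ) × List (E × ℕ)} {e : Ev E}
    {S : Set A} (h : NSPstep G NS Sc Suc Nc No Lmax Mmax s e s')
    (hS : LookaheadEnables G Sc S e) :
    NPstep G Sc Suc Nc No Lmax Mmax (s.1, S, s.2.2) e
      (s'.1, lookaheadUpdate G Sc S e, s'.2.2) := by
  cases h with
  | enable σ _ => exact NPstep.enable σ hS.1 hS.2
  | ctrl σ hσ hδ hl => exact NPstep.ctrl σ hσ hδ hl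
  | unctrl σ hσ hδ => exact NPstep.unctrl σ hσ hδ
  | tick hG _ hm =>
    by_cases hne : (detStep G Sc S Ev.tick).Nonempty
    · simpa [lookaheadUpdate, hne] using NPstep.tickDef hG hS hm hne
    · simpa [lookaheadUpdate, hne] using NPstep.tickUndef hG hS hm hne
  | observe σ _ hm => exact NPstep.observe σ hm

theorem NPstep.toNSPstep {t t' : A × Set A × Multiset (E × ℕ) × List (E × ℕ)} {e : Ev E}
    {y y' : Y} (h : NPstep G Sc Suc Nc No Lmax Mmax t e t')
    (hy : NS.run y (projNS [e]) = some y') :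
    NSPstep G NS Sc Suc Nc No Lmax Mmax (t.1, y, t.2.2) e (t'.1, y', t'.2.2) := by
  cases h with
  | enable σ _ _ =>
    have hδ : NS.δe y σ = some y' := by
      simpa [projNS, List.filter_cons, Ev.isNS, Sup.run] using hy
    exact NSPstep.enable σ hδ
  | ctrl σ hσ hδ hl =>
    obtain rfl : y = y' := Option.some.inj hy
    exact NSPstep.ctrl σ hσ hδ hl
  | unctrl σ hσ hδ =>
    obtain rfl : y = y' := Option.some.inj hy
    exact NSPstep.unctrl σ hσ hδ
  | tickDef hG _ hm _ | tickUndef hG _ hm _ =>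
    have hδ : NS.δt y = some y' := by
      simpa [projNS, List.filter_cons, Ev.isNS, Sup.run] using hy
    exact NSPstep.tick hG hδ hm
  | observe σ hm =>
    have hδ : NS.δo y σ = some y' := by
      simpa [projNS, List.filter_cons, Ev.isNS, Sup.run] using hy
    exact NSPstep.observe σ hδ hm

theorem Path.toNPpath
    (hsub : NSLangSubsetProjNP G NS Sc Suc Nc No Lmax Mmax)
    {s z : A × Y × Multiset (E × ℕ) × List (E × ℕ)} {w : List (Ev E)}
    (h : Path (NSPstep G NS Sc Suc Nc No Lmax Mmax) s w z) :
    ∀ p : List (Ev E), NS.run NS.init p = some s.2.1 →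
      ∃ x, Path (NPstep G Sc Suc Nc No Lmax Mmax)
        (s.1, p.foldl (lookaheadUpdate G Sc) (npInit G Sc Nc).2.1, s.2.2) w x := by
  induction h with
  | nil => exact fun _ _ => ⟨_, Path.nil _⟩
  | @cons s s' _ e _ st _ ih =>
    intro p hp
    have hrun : NS.run NS.init (p ++ projNS [e]) = some s'.2.1 := by
      rw [Sup.run_append, hp, Option.bind_some, st.run_projNS]
    obtain ⟨x, hx⟩ := ih _ hrun
    rw [List.foldl_append, foldl_lookaheadUpdate_projNS_singleton] at hx
    exact ⟨x, .cons (st.toNPstep (lookaheadEnables_of_run hsub (by simp [hrun]))) hx⟩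

theorem Path.toNSPpath {t x : A × Set A × Multiset (E × ℕ) × List (E × ℕ)}
    {w : List (Ev E)} (h : Path (NPstep G Sc Suc Nc No Lmax Mmax) t w x) :
    ∀ y : Y, (NS.run y (projNS w)).isSome →
      ∃ z, Path (NSPstep G NS Sc Suc Nc No Lmax Mmax) (t.1, y, t.2.2) w z := by
  induction h with
  | nil => exact fun _ _ => ⟨_, Path.nil _⟩
  | @cons _ _ _ e _ st _ ih =>
    intro y hy
    rw [projNS_cons, Sup.run_append] at hy
    cases hy' : NS.run y (projNS [e]) with
    | none => simp [hy'] at hy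
    | some y' =>
      rw [hy', Option.bind_some] at hy
      obtain ⟨z, hz⟩ := ih y' hy
      exact ⟨z, .cons (st.toNSPstep hy') hz⟩

/-- Since `Σ_NS ⊆ Σ_NSP`, the language of the synchronous product `NS ‖ NP` is
`{w ∈ L(NP) | P_{Σ_NS}(w) ∈ L(NS)}`. -/
theorem nsp_eq_sync_product {A Y E : Type} [DecidableEq E]
    (G : Plant A E) (NS : Sup Y E) (Sc Suc : Set E) [DecidablePred (· ∈ Sc)]
    (Nc No Lmax Mmax : ℕ)
    (hsub : ∀ v : List (Ev E), (NS.run NS.init v).isSome →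
      ∃ w : List (Ev E),
        (∃ x, Path (NPstep G Sc Suc Nc No Lmax Mmax) (npInit G Sc Nc) w x) ∧
          projNS w = v) :
    ∀ w : List (Ev E),
      (∃ z, Path (NSPstep G NS Sc Suc Nc No Lmax Mmax) (nspInit G NS) w z) ↔
        ((∃ x, Path (NPstep G Sc Suc Nc No Lmax Mmax) (npInit G Sc Nc) w x) ∧
          (NS.run NS.init (projNS w)).isSome) := by
  intro w
  constructor
  · rintro ⟨z, hz⟩
    exact ⟨by simpa [nspInit, npInit] using hz.toNPpath hsub [] rfl,
      Option.isSome_iff_exists.mpr ⟨_, hz.run_projNS⟩⟩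
  · rintro ⟨⟨x, hx⟩, hrun⟩
    simpa [nspInit, npInit] using hx.toNSPpath NS.init hrun

end NSC
end
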